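/- If 1 < μ ≤ ν < 4, then for every θ ∈ [μ,ν], the map F_θ(x) = θx(1-x) maps the interval [a,b] into itself, where b = ν/4 and a = min(1 - 1/μ, F_μ(ν/4)). -/

import Mathlib

/-!
`F_μ` is concave, so on `[a, b]` it stays above `min (F_μ a) (F_μ b)`; both values are at least `a`,
the first because `a ≤ 1 - 1/μ` means `μ (1 - a) ≥ 1`, the second by the choice of `a`. For
`x ∈ [a, b] ⊆ [0, 1]` the value `F_θ x` increases with `θ`, which gives the lower bound for `θ ≥ μ`;
the upper bound is `F_θ x ≤ θ / 4 ≤ ν / 4`.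
-/

open Set

def logisticMap (θ x : ℝ) : ℝ := θ * x * (1 - x)

theorem logisticMap_le_quarter {θ : ℝ} (hθ : 0 ≤ θ) (x : ℝ) : logisticMap θ x ≤ θ / 4 := by
  unfold logisticMap
  nlinarith [mul_nonneg hθ (sq_nonneg (2 * x - 1))]

theorem logisticMap_le_logisticMap_of_le {μ θ x : ℝ} (hμθ : μ ≤ θ) (hx : x ∈ Icc 0 1) :
    logisticMap μ x ≤ logisticMap θ x := by
  have hx' : 0 ≤ x * (1 - x) := mul_nonneg hx.1 (sub_nonneg.2 hx.2)
  unfold logisticMap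
  simpa only [mul_assoc] using mul_le_mul_of_nonneg_right hμθ hx'

theorem logisticMap_concaveOn {θ : ℝ} (hθ : 0 ≤ θ) : ConcaveOn ℝ univ (logisticMap θ) := by
  refine ⟨convex_univ, fun x _ y _ s t hs ht hst => ?_⟩
  have hgap : logisticMap θ (s • x + t • y) - (s • logisticMap θ x + t • logisticMap θ y) =
      θ * s * t * (x - y) ^ 2 := by
    obtain rfl : t = 1 - s := by linarith
    simp only [logisticMap, smul_eq_mul]
    ring
  have : 0 ≤ θ * s * t * (x - y) ^ 2 := by positivity
  linarith

theorem le_logisticMap_self {μ a : ℝ} (hμ : 0 < μ) (ha₀ : 0 ≤ a) (ha : a ≤ 1 - 1 / μ) :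
    a ≤ logisticMap μ a := by
  have hslope : 1 ≤ μ * (1 - a) := (div_le_iff₀' hμ).1 (by linarith)
  calc a = a * 1 := (mul_one a).symm
    _ ≤ a * (μ * (1 - a)) := mul_le_mul_of_nonneg_left hslope ha₀
    _ = logisticMap μ a := by unfold logisticMap; ring

theorem logisticMap_mapsTo_Icc {μ θ a b : ℝ} (hμ : 0 ≤ μ) (hμθ : μ ≤ θ) (ha : 0 ≤ a) (hb : b ≤ 1)
    (hfa : a ≤ logisticMap μ a) (hfb : a ≤ logisticMap μ b) (hθb : θ / 4 ≤ b) :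
    MapsTo (logisticMap θ) (Icc a b) (Icc a b) := by
  intro x hx
  have hx01 : x ∈ Icc 0 1 := ⟨ha.trans hx.1, hx.2.trans hb⟩
  constructor
  · calc a ≤ min (logisticMap μ a) (logisticMap μ b) := le_min hfa hfb
      _ ≤ logisticMap μ x := (logisticMap_concaveOn hμ).min_le_of_mem_Icc trivial trivial hx
      _ ≤ logisticMap θ x := logisticMap_le_logisticMap_of_le hμθ hx01
  · exact (logisticMap_le_quarter (hμ.trans hμθ) x).trans hθb

theorem invariant_interval_of_quadratic_family_general
    (μ ν : ℝ) (hμ : 1 < μ) (hν : ν < 4)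
    (a b : ℝ) (hb : b = ν / 4)
    (ha : a = min (1 - 1 / μ) (μ * (ν / 4) * (1 - ν / 4)))
    (θ : ℝ) (hθ : θ ∈ Set.Icc μ ν)
    (x : ℝ) (hx : x ∈ Set.Icc a b) :
    θ * x * (1 - x) ∈ Set.Icc a b := by
  have hμ₀ : 0 < μ := by linarith
  have hν₀ : 0 ≤ ν := by linarith [hθ.1, hθ.2]
  have hinv : 1 / μ ≤ 1 := (div_le_one hμ₀).2 hμ.le
  have ha₀ : 0 ≤ a := by
    rw [ha]
    exact le_min (by linarith) (mul_nonneg (by positivity) (by linarith))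
  subst hb
  refine logisticMap_mapsTo_Icc hμ₀.le hθ.1 ha₀ (by linarith) ?_ ?_ (by linarith [hθ.2]) hx
  · exact le_logisticMap_self hμ₀ ha₀ (ha ▸ min_le_left _ _)
  · exact ha ▸ min_le_right _ _

theorem invariant_interval_of_quadratic_family
    (μ ν : ℝ) (hμ : 1 < μ) (hμν : μ ≤ ν) (hν : ν < 4)
    (a b : ℝ) (hb : b = ν / 4)
    (ha : a = min (1 - 1 / μ) (μ * (ν / 4) * (1 - ν / 4)))
    (θ : ℝ) (hθ : θ ∈ Set.Icc μ ν)
    (x : ℝ) (hx : x ∈ Set.Icc a b) :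
    θ * x * (1 - x) ∈ Set.Icc a b :=
  invariant_interval_of_quadratic_family_general μ ν hμ hν a b hb ha θ hθ x hx
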